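/- arXiv:2409.10456 — 3 statements merged into one kernel-verified Lean document; each statement's English description precedes it below -/
import Mathlib

section
/- Let a > 0, b > 0. The MRLAI function L(t) = b·t/((a + b·t)·log((a + b·t)/a)) corresponding to μ(t) = 1/(a + b·t) is strictly decreasing on (0,∞). -/
/-!
With `x = (a + b t) / a` one has `b t / ((a + b t) log x) = (x - 1) / (x log x)`, and `x` increases
from `1` as `t` increases from `0`, so it suffices that `g x = (x - 1) / (x log x)` is strictly
decreasing on `(1, ∞)`. The numerator of `g'` is `x log x - (x - 1)(log x + 1) = log x - (x - 1)`,
which is negative for `x ≠ 1`.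
-/

open Real Set

lemma hasDerivAt_sub_one_div_mul_log {x : ℝ} (hx : x ≠ 0) (hlog : log x ≠ 0) :
    HasDerivAt (fun x => (x - 1) / (x * log x)) ((log x - (x - 1)) / (x * log x) ^ 2) x := by
  have hnum : HasDerivAt (fun x : ℝ => x - 1) 1 x := (hasDerivAt_id x).sub_const 1
  exact (hnum.fun_div (hasDerivAt_mul_log hx) (mul_ne_zero hx hlog)).congr_deriv (by ring)

lemma strictAntiOn_sub_one_div_mul_log :
    StrictAntiOn (fun x => (x - 1) / (x * log x)) (Ioi 1) := by
  have hderiv : ∀ x ∈ Ioi (1 : ℝ),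
      HasDerivAt (fun x => (x - 1) / (x * log x)) ((log x - (x - 1)) / (x * log x) ^ 2) x :=
    fun x hx => hasDerivAt_sub_one_div_mul_log (by linarith [mem_Ioi.mp hx])
      (log_pos hx).ne'
  refine strictAntiOn_of_deriv_neg (convex_Ioi 1)
    (fun x hx => (hderiv x hx).continuousAt.continuousWithinAt) fun x hx => ?_
  rw [interior_Ioi] at hx
  have hx0 : 0 < x := by linarith [mem_Ioi.mp hx]
  rw [(hderiv x hx).deriv]
  have hlog : log x < x - 1 := log_lt_sub_one_of_pos hx0 (ne_of_gt hx)
  have hden : 0 < (x * log x) ^ 2 := pow_pos (mul_pos hx0 (log_pos hx)) 2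
  exact div_neg_of_neg_of_pos (by linarith) hden

/-- For a, b > 0, the function
L(t) = b t / ((a + b t) * log((a + b t)/a)) is strictly decreasing on (0,∞). -/
theorem mrlai_reciprocal_linear_strictAnti (a b : ℝ) (ha : 0 < a) (hb : 0 < b) :
    StrictAntiOn
      (fun t : ℝ => b * t / ((a + b * t) * Real.log ((a + b * t) / a)))
      (Set.Ioi 0) := by
  set x : ℝ → ℝ := fun t => (a + b * t) / a
  have hx_mono : StrictMonoOn x (Ioi 0) := fun s _ t _ hst => by
    simp only [x]
    gcongr
  have hx_maps : MapsTo x (Ioi 0) (Ioi 1) := fun t (ht : 0 < t) => by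
    simp only [x, mem_Ioi, one_lt_div ha]
    linarith [mul_pos hb ht]
  refine (strictAntiOn_sub_one_div_mul_log.comp_strictMonoOn hx_mono hx_maps).congr
    fun t _ => ?_
  have hsub : x t - 1 = b * t / a := by simp only [x]; field_simp; ring
  have hmul : x t * log (x t) = (a + b * t) * log (x t) / a := by simp only [x]; ring
  simp only [Function.comp_apply, hsub, hmul, div_div_div_cancel_right₀ ha.ne', x]
end

section
/- Let μ_X, μ_Y : (0,∞) → (0,∞) be continuous, with G_X(t) = ∫₀ᵗ μ_X(u) du and G_Y(t) = ∫₀ᵗ μ_Y(u) du positive for t > 0. Then L_X(t) ≤ L_Y(t) for all t > 0 (where L_X(t) = t·μ_X(t)/G_X(t), L_Y(t) = t·μ_Y(t)/G_Y(t)) if and only if the ratio G_X(t)/G_Y(t) is nonincreasing in t on (0,∞). -/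
open MeasureTheory intervalIntegral Set Filter Topology

/-- If `g` is antitone on `Ioi 0` and has derivative `d` at `t > 0`, then `d ≤ 0`. -/
lemma aux_antitoneOn_deriv_nonpos {g : ℝ → ℝ} {t d : ℝ} (ht : 0 < t)
    (hg : AntitoneOn g (Set.Ioi 0)) (hd : HasDerivAt g d t) : d ≤ 0 := by
  have hslope : Tendsto (slope g t) (𝓝[≠] t) (𝓝 d) :=
    hasDerivAt_iff_tendsto_slope.mp hd
  have h2 : Tendsto (slope g t) (𝓝[>] t) (𝓝 d) :=
    hslope.mono_left (nhdsWithin_mono t fun x hx => ne_of_gt hx)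
  refine le_of_tendsto h2 ?_
  filter_upwards [self_mem_nhdsWithin] with x hx
  have hx' : t < x := hx
  have hgx : g x ≤ g t := hg (Set.mem_Ioi.mpr ht) (Set.mem_Ioi.mpr (ht.trans hx')) hx'.le
  rw [slope_def_field]
  exact div_nonpos_of_nonpos_of_nonneg (by linarith) (by linarith)

/-- With G_X(t) = ∫₀ᵗ μ_X, G_Y(t) = ∫₀ᵗ μ_Y positive,
L_X ≤ L_Y on (0,∞) iff G_X/G_Y is nonincreasing on (0,∞). -/
theorem mrlai_le_iff_ratio_antitone (μX μY : ℝ → ℝ)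
    (hcX : ContinuousOn μX (Set.Ioi 0)) (hcY : ContinuousOn μY (Set.Ioi 0))
    (hpX : ∀ t > (0:ℝ), 0 < μX t) (hpY : ∀ t > (0:ℝ), 0 < μY t)
    (hiX : ∀ t > (0:ℝ), IntervalIntegrable μX MeasureTheory.volume 0 t)
    (hiY : ∀ t > (0:ℝ), IntervalIntegrable μY MeasureTheory.volume 0 t)
    (hGX : ∀ t > (0:ℝ), 0 < ∫ u in (0:ℝ)..t, μX u)
    (hGY : ∀ t > (0:ℝ), 0 < ∫ u in (0:ℝ)..t, μY u) :
    (∀ t > (0:ℝ),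
        t * μX t / (∫ u in (0:ℝ)..t, μX u) ≤
          t * μY t / (∫ u in (0:ℝ)..t, μY u)) ↔
      AntitoneOn
        (fun t : ℝ => (∫ u in (0:ℝ)..t, μX u) / (∫ u in (0:ℝ)..t, μY u))
        (Set.Ioi 0) := by
  set FX : ℝ → ℝ := fun t => ∫ u in (0:ℝ)..t, μX u with hFX
  set FY : ℝ → ℝ := fun t => ∫ u in (0:ℝ)..t, μY u with hFY
  have hdX : ∀ t > (0:ℝ), HasDerivAt FX (μX t) t := fun t ht =>
    intervalIntegral.integral_hasDerivAt_right (hiX t ht)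
      (hcX.stronglyMeasurableAtFilter isOpen_Ioi _ ht)
      (hcX.continuousAt (Ioi_mem_nhds ht))
  have hdY : ∀ t > (0:ℝ), HasDerivAt FY (μY t) t := fun t ht =>
    intervalIntegral.integral_hasDerivAt_right (hiY t ht)
      (hcY.stronglyMeasurableAtFilter isOpen_Ioi _ ht)
      (hcY.continuousAt (Ioi_mem_nhds ht))
  have hdR : ∀ t > (0:ℝ), HasDerivAt (fun s => FX s / FY s)
      ((μX t * FY t - FX t * μY t) / (FY t) ^ 2) t := fun t ht =>
    (hdX t ht).div (hdY t ht) (hGY t ht).ne'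
  -- pointwise equivalence
  have key : ∀ t > (0:ℝ),
      (t * μX t / FX t ≤ t * μY t / FY t ↔ μX t * FY t - FX t * μY t ≤ 0) := by
    intro t ht
    rw [div_le_div_iff₀ (hGX t ht) (hGY t ht)]
    constructor
    · intro h
      nlinarith
    · intro h
      nlinarith
  constructor
  · intro h
    apply antitoneOn_of_deriv_nonpos (convex_Ioi 0)
    · intro x hx
      exact ((hdR x hx).differentiableAt).continuousAt.continuousWithinAt
    · intro x hx
      rw [interior_Ioi] at hx
      exact ((hdR x hx).differentiableAt).differentiableWithinAt
    · intro x hx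
      rw [interior_Ioi] at hx
      rw [(hdR x hx).deriv]
      apply div_nonpos_of_nonpos_of_nonneg
      · exact (key x hx).mp (h x hx)
      · exact sq_nonneg _
  · intro h t ht
    refine (key t ht).mpr ?_
    have hd := aux_antitoneOn_deriv_nonpos ht h (hdR t ht)
    have hsq : (0:ℝ) < (FY t) ^ 2 := pow_pos (hGY t ht) 2
    have heq : μX t * FY t - FX t * μY t =
        ((μX t * FY t - FX t * μY t) / (FY t) ^ 2) * (FY t) ^ 2 :=
      (div_mul_cancel₀ _ hsq.ne').symm
    rw [heq]
    exact mul_nonpos_iff.mpr (Or.inr ⟨hd, hsq.le⟩)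
end

section
/- Let μ_X, μ_Y : (0,∞) → (0,∞) be continuous with ∫₀ᵗ μ_X, ∫₀ᵗ μ_Y positive and finite for all t > 0. If L_X(t) ≤ L_Y(t) and L_Y(t) ≤ L_X(t) for all t > 0, then there exists a constant c > 0 such that μ_X(t) = c·μ_Y(t) for all t > 0. -/
/-!
Equality of the two MRLAI functions means `μX · GY = μY · GX`, where `GX`, `GY` are the
cumulative integrals of `μX`, `μY`. By the fundamental theorem of calculus `GX' = μX` and
`GY' = μY`, so this is exactly the vanishing of the derivative of `GX / GY`. Hence `GX / GY`
is a positive constant `c` on `(0, ∞)`, and then `μX = (GX / GY) · μY = c · μY`.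
-/

open Set MeasureTheory intervalIntegral

theorem hasDerivAt_integral_of_continuousOn {E : Type*} [NormedAddCommGroup E]
    [NormedSpace ℝ E] [CompleteSpace E] {f : ℝ → E} {s : Set ℝ} {a t : ℝ}
    (hs : IsOpen s) (hf : ContinuousOn f s) (ht : t ∈ s)
    (hint : IntervalIntegrable f volume a t) :
    HasDerivAt (fun x => ∫ u in a..x, f u) (f t) t :=
  integral_hasDerivAt_right hint (hf.stronglyMeasurableAtFilter hs t ht)
    (hf.continuousAt (hs.mem_nhds ht))

theorem mul_eq_mul_of_mul_div_eq_mul_div {K : Type*} [Field K] {t a b A B : K}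
    (ht : t ≠ 0) (hA : A ≠ 0) (hB : B ≠ 0) (h : t * a / A = t * b / B) :
    a * B = b * A := by
  rw [div_eq_div_iff hA hB, mul_assoc, mul_assoc] at h
  exact mul_left_cancel₀ ht h

theorem IsOpen.div_eq_div_of_deriv_mul_eq {𝕜 : Type*} [RCLike 𝕜] {f g f' g' : 𝕜 → 𝕜}
    {s : Set 𝕜} (hs : IsOpen s) (hs' : IsPreconnected s)
    (hf : ∀ x ∈ s, HasDerivAt f (f' x) x) (hg : ∀ x ∈ s, HasDerivAt g (g' x) x)
    (hg0 : ∀ x ∈ s, g x ≠ 0) (hfg : ∀ x ∈ s, f' x * g x = g' x * f x)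
    {x y : 𝕜} (hx : x ∈ s) (hy : y ∈ s) : f x / g x = f y / g y := by
  have hderiv : ∀ z ∈ s, HasDerivAt (fun z => f z / g z) 0 z := fun z hz => by
    have hquot := (hf z hz).div (hg z hz) (hg0 z hz)
    rwa [hfg z hz, mul_comm (g' z), sub_self, zero_div] at hquot
  exact hs.is_const_of_deriv_eq_zero hs'
    (fun z hz => (hderiv z hz).differentiableAt.differentiableWithinAt)
    (fun z hz => (hderiv z hz).deriv) hx hy

theorem mrlai_antisymm_proportional_general (μX μY : ℝ → ℝ)
    (hcX : ContinuousOn μX (Set.Ioi 0)) (hcY : ContinuousOn μY (Set.Ioi 0))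
    (hiX : ∀ t > (0:ℝ), IntervalIntegrable μX MeasureTheory.volume 0 t)
    (hiY : ∀ t > (0:ℝ), IntervalIntegrable μY MeasureTheory.volume 0 t)
    (hGX : ∀ t > (0:ℝ), 0 < ∫ u in (0:ℝ)..t, μX u)
    (hGY : ∀ t > (0:ℝ), 0 < ∫ u in (0:ℝ)..t, μY u)
    (hXY : ∀ t > (0:ℝ),
      t * μX t / (∫ u in (0:ℝ)..t, μX u) ≤ t * μY t / (∫ u in (0:ℝ)..t, μY u))
    (hYX : ∀ t > (0:ℝ),
      t * μY t / (∫ u in (0:ℝ)..t, μY u) ≤ t * μX t / (∫ u in (0:ℝ)..t, μX u)) :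
    ∃ c > (0:ℝ), ∀ t > (0:ℝ), μX t = c * μY t := by
  have hcross : ∀ t ∈ Ioi (0:ℝ),
      μX t * (∫ u in (0:ℝ)..t, μY u) = μY t * ∫ u in (0:ℝ)..t, μX u := fun t ht =>
    mul_eq_mul_of_mul_div_eq_mul_div (ne_of_gt ht) (hGX t ht).ne' (hGY t ht).ne'
      (le_antisymm (hXY t ht) (hYX t ht))
  refine ⟨(∫ u in (0:ℝ)..1, μX u) / ∫ u in (0:ℝ)..1, μY u,
    div_pos (hGX 1 one_pos) (hGY 1 one_pos), fun t ht => ?_⟩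
  have hratio := isOpen_Ioi.div_eq_div_of_deriv_mul_eq isPreconnected_Ioi
    (fun s hs => hasDerivAt_integral_of_continuousOn isOpen_Ioi hcX hs (hiX s hs))
    (fun s hs => hasDerivAt_integral_of_continuousOn isOpen_Ioi hcY hs (hiY s hs))
    (fun s hs => (hGY s hs).ne') hcross (mem_Ioi.2 ht) (mem_Ioi.2 one_pos)
  rw [← hratio, div_mul_eq_mul_div, eq_div_iff (hGY t ht).ne', hcross t ht, mul_comm]

/-- If L_X ≤ L_Y and L_Y ≤ L_X on (0,∞), then μ_X and μ_Y are
proportional. -/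
theorem mrlai_antisymm_proportional (μX μY : ℝ → ℝ)
    (hcX : ContinuousOn μX (Set.Ioi 0)) (hcY : ContinuousOn μY (Set.Ioi 0))
    (hpX : ∀ t > (0:ℝ), 0 < μX t) (hpY : ∀ t > (0:ℝ), 0 < μY t)
    (hiX : ∀ t > (0:ℝ), IntervalIntegrable μX MeasureTheory.volume 0 t)
    (hiY : ∀ t > (0:ℝ), IntervalIntegrable μY MeasureTheory.volume 0 t)
    (hGX : ∀ t > (0:ℝ), 0 < ∫ u in (0:ℝ)..t, μX u)
    (hGY : ∀ t > (0:ℝ), 0 < ∫ u in (0:ℝ)..t, μY u)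
    (hXY : ∀ t > (0:ℝ),
      t * μX t / (∫ u in (0:ℝ)..t, μX u) ≤ t * μY t / (∫ u in (0:ℝ)..t, μY u))
    (hYX : ∀ t > (0:ℝ),
      t * μY t / (∫ u in (0:ℝ)..t, μY u) ≤ t * μX t / (∫ u in (0:ℝ)..t, μX u)) :
    ∃ c > (0:ℝ), ∀ t > (0:ℝ), μX t = c * μY t :=
  mrlai_antisymm_proportional_general μX μY hcX hcY hiX hiY hGX hGY hXY hYX
end
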